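/- arXiv:math/9803122 — 3 statements merged into one kernel-verified Lean document; each statement's English description precedes it below -/
import Mathlib

section
/- Every compact topological semigroup (nonempty, with jointly continuous associative multiplication) satisfying both left and right cancellation is a group: it has an identity element and every element has an inverse. -/
/-- Every nonempty compact Hausdorff topological semigroup with two-sided
cancellation is a group: it has a two-sided identity and every element has
a two-sided inverse. -/
theorem compact_cancellative_semigroup_is_group
    (G : Type*) [Semigroup G] [TopologicalSpace G] [CompactSpace G] [T2Space G]
    [Nonempty G] (hcont : Continuous fun p : G × G => p.1 * p.2)
    (hlc : ∀ r p q : G, r * p = r * q → p = q)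
    (hrc : ∀ r p q : G, p * r = q * r → p = q) :
    ∃ e : G, (∀ q : G, e * q = q ∧ q * e = q) ∧
      ∀ p : G, ∃ p' : G, p * p' = e ∧ p' * p = e := by
  have cml : ∀ r : G, Continuous (· * r) := fun r =>
    hcont.comp (continuous_id.prodMk continuous_const)
  have cmr : ∀ r : G, Continuous (r * ·) := fun r =>
    hcont.comp (continuous_const.prodMk continuous_id)
  obtain ⟨e, he⟩ := exists_idempotent_of_compact_t2_of_continuous_mul_left cml
  have hid : ∀ q : G, e * q = q ∧ q * e = q := by
    intro q
    constructor
    · exact hlc e _ _ (by rw [← mul_assoc, he])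
    · exact hrc e _ _ (by rw [mul_assoc, he])
  refine ⟨e, hid, fun p => ?_⟩
  -- powers of p : f n = p^(n+1)
  let f : ℕ → G := fun n => Nat.rec p (fun _ x => x * p) n
  have hf0 : f 0 = p := rfl
  have hfs : ∀ n, f (n + 1) = f n * p := fun n => rfl
  have hcomm : ∀ n, p * f n = f n * p := by
    intro n
    induction n with
    | zero => rfl
    | succ n ih => rw [hfs, ← mul_assoc, ih]
  have hadd : ∀ m n, f m * f n = f (m + n + 1) := by
    intro m n
    induction n with
    | zero => rfl
    | succ n ih => rw [hfs, ← mul_assoc, ih, hfs]; rfl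
  let S : Set G := closure (Set.range f)
  have hS_compact : IsCompact S := IsClosed.isCompact isClosed_closure
  have hS_mul : ∀ x ∈ S, ∀ y ∈ S, x * y ∈ S := by
    have step1 : ∀ n, ∀ y ∈ S, f n * y ∈ S := by
      intro n y hy
      have : Set.MapsTo (f n * ·) (Set.range f) S := by
        rintro _ ⟨m, rfl⟩
        exact subset_closure ⟨n + m + 1, (hadd n m).symm⟩
      have := this.closure (cmr (f n)) hy
      rwa [isClosed_closure.closure_eq] at this
    intro x hx y hy
    have : Set.MapsTo (· * y) (Set.range f) S := by
      rintro _ ⟨n, rfl⟩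
      exact step1 n y hy
    have := this.closure (cml y) hx
    rwa [isClosed_closure.closure_eq] at this
  have hS_comm : ∀ x ∈ S, p * x = x * p := by
    intro x hx
    have hcl : IsClosed {x : G | p * x = x * p} :=
      isClosed_eq (cmr p) (cml p)
    have : Set.range f ⊆ {x : G | p * x = x * p} := by
      rintro _ ⟨n, rfl⟩; exact hcomm n
    exact (closure_minimal this hcl) hx
  -- idempotent in the subsemigroup generated by p
  obtain ⟨m, hmS, hmm⟩ := exists_idempotent_in_compact_subsemigroup cml S
    ⟨p, subset_closure ⟨0, rfl⟩⟩ hS_compact hS_mul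
  -- m = e by cancellation
  have hme : m = e := hlc m _ _ (by rw [hmm, (hid m).2])
  -- e ∈ p * S
  have hpS_closed : IsClosed ((p * ·) '' S) :=
    (hS_compact.image (cmr p)).isClosed
  have hsub : S ⊆ insert p ((p * ·) '' S) := by
    apply closure_minimal
    · rintro _ ⟨n, rfl⟩
      cases n with
      | zero => exact Set.mem_insert _ _
      | succ n =>
          right
          exact ⟨f n, subset_closure ⟨n, rfl⟩, by show p * f n = f (n+1); rw [hcomm n, ← hfs]⟩
    · rw [Set.insert_eq]; exact isClosed_singleton.union hpS_closed
  have heS : e ∈ S := hme ▸ hmS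
  rcases hsub heS with h | ⟨s, hsS, hps⟩
  · -- e = p, so p is its own inverse
    exact ⟨p, by rw [← h, he], by rw [← h, he]⟩
  · exact ⟨s, hps, by rw [← hS_comm s hsS]; exact hps⟩
end

section
/- Let G be a compact group, v : G → GL(V) a continuous finite-dimensional representation on a complex inner product space V, and h the normalized Haar measure. Define y = ∫ v(s)* v(s) dh(s). Then y is positive and invertible, and w(s) = y^{1/2} v(s) y^{-1/2} defines a representation equivalent to v that is unitary: w(s)* w(s) = 1 for all s in G. -/
/-!
Averaging `v(s)* v(s)` over the Haar probability measure gives a positive operator `y` with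
`⟪y x, x⟫ = ∫ ‖v(s) x‖² dh(s)`; this is positive for `x ≠ 0` because the integrand is continuous
and equals `‖x‖²` at `s = 1`, so `y` is invertible. Right invariance of `h` (automatic on a compact
group) gives `v(t)* y v(t) = y`, and with `y = r²`, `r = y^{1/2}`, this says exactly that
`r v(t) r⁻¹` is unitary.
-/

open MeasureTheory ContinuousLinearMap

lemma isMulRightInvariant_of_isProbabilityMeasure {G : Type*} [Group G] [TopologicalSpace G]
    [IsTopologicalGroup G] [LocallyCompactSpace G] [MeasurableSpace G] [BorelSpace G]
    (μ : Measure G) [μ.IsHaarMeasure] [IsProbabilityMeasure μ] : μ.IsMulRightInvariant where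
  map_mul_right_eq_self g := by
    have : IsProbabilityMeasure (μ.map (· * g)) :=
      Measure.isProbabilityMeasure_map (measurable_mul_const g).aemeasurable
    exact Measure.isHaarMeasure_eq_of_isProbabilityMeasure _ _

lemma star_mul_integral_star_mul_self_mul {G A : Type*} [Group G] [MeasurableSpace G]
    [MeasurableMul G] {μ : Measure G} [μ.IsMulRightInvariant] [NormedRing A] [NormedAlgebra ℝ A]
    [StarMul A] (v : G →* A) (hv : Integrable (fun s ↦ star (v s) * v s) μ) (t : G) :
    star (v t) * (∫ s, star (v s) * v s ∂μ) * v t = ∫ s, star (v s) * v s ∂μ := by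
  rw [← integral_const_mul_of_integrable hv, ← integral_mul_const_of_integrable (hv.const_mul _)]
  simp only [← mul_assoc, ← star_mul, ← map_mul]
  simp only [mul_assoc, ← map_mul]
  exact integral_mul_right_eq_self (fun s ↦ star (v s) * v s) t

section InnerProductSpace

variable {X E : Type*} [MeasurableSpace X] {μ : Measure X}
  [NormedAddCommGroup E] [InnerProductSpace ℂ E] [CompleteSpace E]

lemma inner_integral_star_mul_self_apply {f : X → E →L[ℂ] E}
    (hf : Integrable (fun s ↦ star (f s) * f s) μ) (x : E) :
    inner ℂ ((∫ s, star (f s) * f s ∂μ) x) x = ((∫ s, ‖f s x‖ ^ 2 ∂μ : ℝ) : ℂ) := by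
  rw [integral_apply hf, ← inner_conj_symm, ← integral_inner (hf.apply_continuousLinearMap x),
    ← integral_conj, ← integral_complex_ofReal]
  congr 1 with s
  rw [inner_conj_symm, mul_apply_eq_comp, star_eq_adjoint, adjoint_inner_left,
    inner_self_eq_norm_sq_to_K]
  norm_cast

lemma isPositive_integral_star_mul_self {f : X → E →L[ℂ] E}
    (hf : Integrable (fun s ↦ star (f s) * f s) μ) :
    (∫ s, star (f s) * f s ∂μ).IsPositive := by
  refine (isPositive_iff_complex _).mpr fun x ↦ ?_
  rw [inner_integral_star_mul_self_apply hf, RCLike.re_to_complex, Complex.ofReal_re]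
  exact ⟨rfl, integral_nonneg fun s ↦ sq_nonneg _⟩

lemma isUnit_integral_star_mul_self [TopologicalSpace X] [CompactSpace X] [OpensMeasurableSpace X]
    [μ.IsOpenPosMeasure] [IsFiniteMeasure μ] [FiniteDimensional ℂ E] {f : X → E →L[ℂ] E}
    (hf : Continuous f) {s₀ : X} (hs₀ : Function.Injective (f s₀)) :
    IsUnit (∫ s, star (f s) * f s ∂μ) := by
  have hcont : Continuous fun s ↦ star (f s) * f s := hf.star.mul hf
  have hint : Integrable (fun s ↦ star (f s) * f s) μ :=
    hcont.integrable_of_hasCompactSupport (.of_compactSpace _)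
  have hinj : Function.Injective (∫ s, star (f s) * f s ∂μ : E →L[ℂ] E) := by
    refine (injective_iff_map_eq_zero _).mpr fun x hx ↦ ?_
    by_contra hx0
    have hcontx : Continuous fun s ↦ ‖f s x‖ ^ 2 := by fun_prop
    have hpos : 0 < ∫ s, ‖f s x‖ ^ 2 ∂μ :=
      hcontx.integral_pos_of_hasCompactSupport_nonneg_nonzero
        (.of_compactSpace _) (fun s ↦ sq_nonneg _) (x := s₀)
        (pow_ne_zero 2 (norm_ne_zero_iff.mpr ((map_ne_zero_iff _ hs₀).mpr hx0)))
    have := inner_integral_star_mul_self_apply hint x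
    rw [hx, inner_zero_left, eq_comm, Complex.ofReal_eq_zero] at this
    exact hpos.ne' this
  exact isUnit_iff_bijective.mpr ⟨hinj, LinearMap.injective_iff_surjective.mp hinj⟩

end InnerProductSpace

lemma star_conj_mul_self_eq_one {A : Type*} [Monoid A] [StarMul A] {r : Aˣ}
    (hr : IsSelfAdjoint (r : A)) {u : A} (hu : star u * (r * r) * u = r * r) :
    star (r * (u * ↑r⁻¹)) * (r * (u * ↑r⁻¹)) = 1 := by
  have hr' : star (↑r⁻¹ : A) = ↑r⁻¹ := by
    rw [← Units.coe_star_inv]; congr; exact Units.ext hr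
  simp only [star_mul, hr.star_eq, hr']
  calc _ = ↑r⁻¹ * (star u * (r * r) * u) * ↑r⁻¹ := by simp only [mul_assoc]
    _ = 1 := by rw [hu]; simp

/-- Unitarizability: for a continuous finite-dimensional representation `v` of a
compact group `G` on a complex inner product space, the averaged operator
`y = ∫ v(s)* v(s) dh(s)` is positive and invertible, and conjugating `v` by the
positive square root `r` of `y` yields an equivalent representation
`w(s) = r v(s) r⁻¹` which is unitary: `w(s)* w(s) = 1` for all `s`. -/
theorem unitarizable_of_compact
    (G : Type*) [Group G] [TopologicalSpace G] [IsTopologicalGroup G]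
    [CompactSpace G] [MeasurableSpace G] [BorelSpace G]
    (h : Measure G) [h.IsHaarMeasure] [IsProbabilityMeasure h]
    (V : Type*) [NormedAddCommGroup V] [InnerProductSpace ℂ V]
    [FiniteDimensional ℂ V]
    (v : G →* (V →L[ℂ] V)ˣ)
    (hcont : Continuous fun s : G => ((v s : V →L[ℂ] V)))
    (y : V →L[ℂ] V)
    (hy : y = ∫ s, (ContinuousLinearMap.adjoint (v s : V →L[ℂ] V)).comp
      (v s : V →L[ℂ] V) ∂h) :
    y.IsPositive ∧
    (∃ y' : V →L[ℂ] V, y.comp y' = 1 ∧ y'.comp y = 1) ∧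
    (∃ r r' : V →L[ℂ] V, r.IsPositive ∧ r.comp r = y ∧
      r.comp r' = 1 ∧ r'.comp r = 1 ∧
      ∀ s : G,
        (ContinuousLinearMap.adjoint (r.comp ((v s : V →L[ℂ] V).comp r'))).comp
          (r.comp ((v s : V →L[ℂ] V).comp r')) = 1) := by
  have : h.IsMulRightInvariant := isMulRightInvariant_of_isProbabilityMeasure h
  let u : G →* V →L[ℂ] V := (Units.coeHom _).comp v
  have hu : Continuous u := hcont
  have hint : Integrable (fun s ↦ star (u s) * u s) h :=
    (hu.star.mul hu).integrable_of_hasCompactSupport (.of_compactSpace _)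
  replace hy : y = ∫ s, star (u s) * u s ∂h := hy
  have hpos : y.IsPositive := hy ▸ isPositive_integral_star_mul_self hint
  have hunit : IsUnit y :=
    hy ▸ isUnit_integral_star_mul_self hu (s₀ := 1) (by simpa using Function.injective_id)
  have hy0 : 0 ≤ y := (nonneg_iff_isPositive y).mpr hpos
  obtain ⟨R, hR⟩ := (CFC.isUnit_sqrt_iff y hy0).mpr hunit
  have hR0 : 0 ≤ (R : V →L[ℂ] V) := hR ▸ CFC.sqrt_nonneg y
  have hRR : (R : V →L[ℂ] V) * R = y := hR ▸ CFC.sqrt_mul_sqrt_self y hy0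
  obtain ⟨Y, rfl⟩ := hunit
  refine ⟨hpos, ⟨_, Y.mul_inv, Y.inv_mul⟩, R, _, (nonneg_iff_isPositive _).mp hR0, hRR,
    R.mul_inv, R.inv_mul, fun s ↦ ?_⟩
  refine star_conj_mul_self_eq_one (IsSelfAdjoint.of_nonneg hR0) (u := u s) ?_
  rw [hRR, hy]
  exact star_mul_integral_star_mul_self_mul u hint s
end

section
/- Let A₀ be a Hopf *-algebra spanned by the matrix coefficients u^α_{pq} of a family of mutually inequivalent irreducible unitary corepresentations indexed by α, with the one-dimensional trivial corepresentation indexed by α = 1, and assume the u^α_{pq} are linearly independent. Then the linear functional h : A₀ → ℂ defined by h(u^α_{pq}) = δ_{α,1} is the unique unital invariant functional: (ι ⊗ h)Φ(a) = h(a)1 and (h ⊗ ι)Φ(a) = h(a)1 for all a ∈ A₀, h(1) = 1, and any linear functional with these properties equals h. -/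
open TensorProduct Finset

/-!
For `α ≠ 1` every term of `(ι ⊗ h)Φ(u^α_{pq}) = ∑ₖ h(u^α_{kq}) u^α_{pk}` vanishes, while on
the trivial corepresentation `Φ(1) = 1 ⊗ 1`; this gives invariance of `h` on a basis. Conversely, if `h'` is unital and
invariant, applying `h` to `(ι ⊗ h')Φ(u^α_{pq}) = h'(u^α_{pq}) 1` gives
`∑ₖ h'(u^α_{kq}) h(u^α_{pk}) = h'(u^α_{pq})`, whose left side vanishes for `α ≠ 1`.
-/

section Invariance

variable {R A : Type*} [CommSemiring R] [Semiring A] [Algebra R A]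

def IsLeftInvariant (Φ : A →ₗ[R] A ⊗[R] A) (h : A →ₗ[R] R) : Prop :=
  ∀ a, TensorProduct.rid R A (TensorProduct.map LinearMap.id h (Φ a)) = h a • 1

def IsRightInvariant (Φ : A →ₗ[R] A ⊗[R] A) (h : A →ₗ[R] R) : Prop :=
  ∀ a, TensorProduct.lid R A (TensorProduct.map h LinearMap.id (Φ a)) = h a • 1

theorem isLeftInvariant_of_basis {κ : Type*} (b : Module.Basis κ R A)
    {Φ : A →ₗ[R] A ⊗[R] A} {h : A →ₗ[R] R}
    (hb : ∀ i, TensorProduct.rid R A (TensorProduct.map LinearMap.id h (Φ (b i))) =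
      h (b i) • 1) :
    IsLeftInvariant Φ h := fun a =>
  LinearMap.congr_fun (b.ext (f₁ := (TensorProduct.rid R A).toLinearMap ∘ₗ
    TensorProduct.map LinearMap.id h ∘ₗ Φ) (f₂ := h.smulRight 1) hb) a

theorem isRightInvariant_of_basis {κ : Type*} (b : Module.Basis κ R A)
    {Φ : A →ₗ[R] A ⊗[R] A} {h : A →ₗ[R] R}
    (hb : ∀ i, TensorProduct.lid R A (TensorProduct.map h LinearMap.id (Φ (b i))) =
      h (b i) • 1) :
    IsRightInvariant Φ h := fun a =>
  LinearMap.congr_fun (b.ext (f₁ := (TensorProduct.lid R A).toLinearMap ∘ₗ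
    TensorProduct.map h LinearMap.id ∘ₗ Φ) (f₂ := h.smulRight 1) hb) a

end Invariance

section Comatrix

variable {R A : Type*} [CommSemiring R] [Semiring A] [Algebra R A]
  {ι : Type*} {n : ι → ℕ} {Φ : A →ₗ[R] A ⊗[R] A} {u : (α : ι) → Fin (n α) → Fin (n α) → A}

theorem rid_map_comatrix (hΦ : ∀ α p q, Φ (u α p q) = ∑ k, u α p k ⊗ₜ[R] u α k q)
    (φ : A →ₗ[R] R) (α : ι) (p q : Fin (n α)) :
    TensorProduct.rid R A (TensorProduct.map LinearMap.id φ (Φ (u α p q))) =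
      ∑ k, φ (u α k q) • u α p k := by
  simp [hΦ]

theorem lid_map_comatrix (hΦ : ∀ α p q, Φ (u α p q) = ∑ k, u α p k ⊗ₜ[R] u α k q)
    (φ : A →ₗ[R] R) (α : ι) (p q : Fin (n α)) :
    TensorProduct.lid R A (TensorProduct.map φ LinearMap.id (Φ (u α p q))) =
      ∑ k, φ (u α p k) • u α k q := by
  simp [hΦ]

theorem apply_comatrix_eq_zero_of_isLeftInvariant
    (hΦ : ∀ α p q, Φ (u α p q) = ∑ k, u α p k ⊗ₜ[R] u α k q)
    {h φ : A →ₗ[R] R} (hh : IsLeftInvariant Φ h) (hφ1 : φ 1 = 1) {α : ι}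
    (hφ : ∀ p k, φ (u α p k) = 0) (p q : Fin (n α)) :
    h (u α p q) = 0 := by
  have key := congrArg φ (hh (u α p q))
  rw [rid_map_comatrix hΦ] at key
  simpa [hφ, hφ1] using key.symm

variable [DecidableEq ι] {α₀ : ι} {h : A →ₗ[R] R}

theorem delta_apply_one (hdim : n α₀ = 1) (htriv : ∀ p q, u α₀ p q = 1)
    (hdef : ∀ α p q, h (u α p q) = if α = α₀ then 1 else 0) : h 1 = 1 := by
  rw [← htriv ⟨0, by omega⟩ ⟨0, by omega⟩, hdef, if_pos rfl]

theorem isLeftInvariant_delta (hdim : n α₀ = 1) (htriv : ∀ p q, u α₀ p q = 1)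
    (hdef : ∀ α p q, h (u α p q) = if α = α₀ then 1 else 0)
    (b : Module.Basis ((α : ι) × (Fin (n α) × Fin (n α))) R A)
    (hb : ∀ α p q, b ⟨α, (p, q)⟩ = u α p q)
    (hΦ : ∀ α p q, Φ (u α p q) = ∑ k, u α p k ⊗ₜ[R] u α k q) :
    IsLeftInvariant Φ h := by
  refine isLeftInvariant_of_basis b fun ⟨α, p, q⟩ => ?_
  rw [hb, rid_map_comatrix hΦ]
  by_cases hα : α = α₀
  · subst hα
    simp [htriv, hdim]
  · simp [hdef, hα]

theorem isRightInvariant_delta (hdim : n α₀ = 1) (htriv : ∀ p q, u α₀ p q = 1)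
    (hdef : ∀ α p q, h (u α p q) = if α = α₀ then 1 else 0)
    (b : Module.Basis ((α : ι) × (Fin (n α) × Fin (n α))) R A)
    (hb : ∀ α p q, b ⟨α, (p, q)⟩ = u α p q)
    (hΦ : ∀ α p q, Φ (u α p q) = ∑ k, u α p k ⊗ₜ[R] u α k q) :
    IsRightInvariant Φ h := by
  refine isRightInvariant_of_basis b fun ⟨α, p, q⟩ => ?_
  rw [hb, lid_map_comatrix hΦ]
  by_cases hα : α = α₀
  · subst hα
    simp [htriv, hdim]
  · simp [hdef, hα]

theorem eq_delta_of_isLeftInvariant (hdim : n α₀ = 1) (htriv : ∀ p q, u α₀ p q = 1)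
    (hdef : ∀ α p q, h (u α p q) = if α = α₀ then 1 else 0)
    (b : Module.Basis ((α : ι) × (Fin (n α) × Fin (n α))) R A)
    (hb : ∀ α p q, b ⟨α, (p, q)⟩ = u α p q)
    (hΦ : ∀ α p q, Φ (u α p q) = ∑ k, u α p k ⊗ₜ[R] u α k q)
    {h' : A →ₗ[R] R} (hh' : IsLeftInvariant Φ h')
    (h'1 : h' 1 = 1) : h' = h := by
  refine b.ext fun ⟨α, p, q⟩ => ?_
  rw [hb, hdef]
  by_cases hα : α = α₀
  · subst hα
    rw [if_pos rfl, htriv, h'1]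
  · rw [if_neg hα]
    exact apply_comatrix_eq_zero_of_isLeftInvariant hΦ hh' (delta_apply_one hdim htriv hdef)
      (fun p k => by rw [hdef, if_neg hα]) p q

end Comatrix

theorem cqg_haar_functional_unique_general
    (A : Type*) [Ring A] [Algebra ℂ A]
    (Φ : A →ₐ[ℂ] A ⊗[ℂ] A)
    (ι : Type*) [DecidableEq ι] (nn : ι → ℕ)
    (u : (α : ι) → Fin (nn α) → Fin (nn α) → A)
    (b : Module.Basis ((α : ι) × (Fin (nn α) × Fin (nn α))) ℂ A)
    (hb : ∀ (α : ι) (p q : Fin (nn α)), b ⟨α, (p, q)⟩ = u α p q)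
    (hcomatrix : ∀ (α : ι) (p q : Fin (nn α)),
      Φ (u α p q) = ∑ k, u α p k ⊗ₜ[ℂ] u α k q)
    (α₀ : ι) (hdim : nn α₀ = 1)
    (htriv : ∀ p q : Fin (nn α₀), u α₀ p q = 1)
    (h : A →ₗ[ℂ] ℂ)
    (hdef : ∀ (α : ι) (p q : Fin (nn α)),
      h (u α p q) = if α = α₀ then 1 else 0) :
    (∀ a : A, (TensorProduct.rid ℂ A)
        ((TensorProduct.map LinearMap.id h) (Φ a)) = h a • 1) ∧
    (∀ a : A, (TensorProduct.lid ℂ A)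
        ((TensorProduct.map h LinearMap.id) (Φ a)) = h a • 1) ∧
    (h 1 = 1) ∧
    (∀ h' : A →ₗ[ℂ] ℂ,
      (∀ a : A, (TensorProduct.rid ℂ A)
          ((TensorProduct.map LinearMap.id h') (Φ a)) = h' a • 1) →
      (∀ a : A, (TensorProduct.lid ℂ A)
          ((TensorProduct.map h' LinearMap.id) (Φ a)) = h' a • 1) →
      h' 1 = 1 → h' = h) := by
  have hΦ : ∀ α p q, Φ.toLinearMap (u α p q) = ∑ k, u α p k ⊗ₜ[ℂ] u α k q := hcomatrix
  exact ⟨isLeftInvariant_delta hdim htriv hdef b hb hΦ,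
    isRightInvariant_delta hdim htriv hdef b hb hΦ,
    delta_apply_one hdim htriv hdef,
    fun h' hh' _ h'1 => eq_delta_of_isLeftInvariant hdim htriv hdef b hb hΦ hh' h'1⟩

/-- For a CQG (Hopf *-) algebra `A₀` with linear basis given by the matrix
coefficients `u^α_{pq}` of a family of (unitary) corepresentations, with the
trivial one-dimensional corepresentation indexed by `α₀`, the functional
`h(u^α_{pq}) = δ_{α,α₀}` is the unique unital two-sided invariant functional:
`(ι ⊗ h)Φ(a) = h(a)1`, `(h ⊗ ι)Φ(a) = h(a)1` and `h(1) = 1`. -/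
theorem cqg_haar_functional_unique
    (A : Type*) [Ring A] [Algebra ℂ A] [StarRing A] [StarModule ℂ A]
    (Φ : A →ₐ[ℂ] A ⊗[ℂ] A)
    (ι : Type*) [DecidableEq ι] (nn : ι → ℕ)
    (u : (α : ι) → Fin (nn α) → Fin (nn α) → A)
    (b : Module.Basis ((α : ι) × (Fin (nn α) × Fin (nn α))) ℂ A)
    (hb : ∀ (α : ι) (p q : Fin (nn α)), b ⟨α, (p, q)⟩ = u α p q)
    (hcomatrix : ∀ (α : ι) (p q : Fin (nn α)),
      Φ (u α p q) = ∑ k, u α p k ⊗ₜ[ℂ] u α k q)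
    (hunitary : ∀ (α : ι) (p q : Fin (nn α)),
      (∑ k, star (u α k p) * u α k q = if p = q then (1 : A) else 0) ∧
      (∑ k, u α p k * star (u α q k) = if p = q then (1 : A) else 0))
    (α₀ : ι) (hdim : nn α₀ = 1)
    (htriv : ∀ p q : Fin (nn α₀), u α₀ p q = 1)
    (h : A →ₗ[ℂ] ℂ)
    (hdef : ∀ (α : ι) (p q : Fin (nn α)),
      h (u α p q) = if α = α₀ then 1 else 0) :
    (∀ a : A, (TensorProduct.rid ℂ A)
        ((TensorProduct.map LinearMap.id h) (Φ a)) = h a • 1) ∧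
    (∀ a : A, (TensorProduct.lid ℂ A)
        ((TensorProduct.map h LinearMap.id) (Φ a)) = h a • 1) ∧
    (h 1 = 1) ∧
    (∀ h' : A →ₗ[ℂ] ℂ,
      (∀ a : A, (TensorProduct.rid ℂ A)
          ((TensorProduct.map LinearMap.id h') (Φ a)) = h' a • 1) →
      (∀ a : A, (TensorProduct.lid ℂ A)
          ((TensorProduct.map h' LinearMap.id) (Φ a)) = h' a • 1) →
      h' 1 = 1 → h' = h) :=
  cqg_haar_functional_unique_general A Φ ι nn u b hb hcomatrix α₀ hdim htriv h hdef
end
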